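/- arXiv:solv-int/9801007 — 5 statements merged into one kernel-verified Lean document; each statement's English description precedes it below -/
import Mathlib

section
/- Let v, B : ℝ × ℝ³ → ℝ³ be smooth time-dependent vector fields with B divergence-free, and suppose B satisfies the frozen field equation ∂B/∂t = ∇ × (v × B). Then the time-dependent vector field (t,x) ↦ B(t,x) is an infinitesimal symmetry of the suspended velocity field ∂_t + v·∇, i.e. the Lie bracket [∂_t + v·∇, B·∇] = 0 as vector fields on ℝ × ℝ³. -/
open scoped BigOperators

noncomputable section

/-- Points of physical space `ℝ³`. -/
abbrev V3 := Fin 3 → ℝ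

/-- Euclidean dot product on `ℝ³`. -/
def dot3 (a b : V3) : ℝ := ∑ i, a i * b i

/-- Cross product on `ℝ³`. -/
def cross3 (a b : V3) : V3 :=
  ![a 1 * b 2 - a 2 * b 1, a 2 * b 0 - a 0 * b 2, a 0 * b 1 - a 1 * b 0]

/-- Spatial partial derivative `∂/∂xᵢ` of a time-dependent scalar field. -/
def pd (i : Fin 3) (f : ℝ → V3 → ℝ) (t : ℝ) (x : V3) : ℝ :=
  fderiv ℝ (fun y => f t y) x (Pi.single i 1)

/-- Time partial derivative `∂/∂t` of a time-dependent scalar field. -/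
def pt (f : ℝ → V3 → ℝ) (t : ℝ) (x : V3) : ℝ :=
  deriv (fun s => f s x) t

/-- Spatial gradient of a time-dependent scalar field. -/
def grad (f : ℝ → V3 → ℝ) (t : ℝ) (x : V3) : V3 :=
  fun i => pd i f t x

/-- Spatial divergence of a time-dependent vector field. -/
def div3 (u : ℝ → V3 → V3) (t : ℝ) (x : V3) : ℝ :=
  ∑ i, pd i (fun s y => u s y i) t x

/-- Spatial curl of a time-dependent vector field. -/
def curl3 (u : ℝ → V3 → V3) (t : ℝ) (x : V3) : V3 :=
  ![pd 1 (fun s y => u s y 2) t x - pd 2 (fun s y => u s y 1) t x,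
    pd 2 (fun s y => u s y 0) t x - pd 0 (fun s y => u s y 2) t x,
    pd 0 (fun s y => u s y 1) t x - pd 1 (fun s y => u s y 0) t x]

/-- Joint smoothness of a time-dependent scalar field. -/
def SmoothS (f : ℝ → V3 → ℝ) : Prop := ContDiff ℝ (⊤ : ℕ∞) (fun p : ℝ × V3 => f p.1 p.2)

/-- Joint smoothness of a time-dependent vector field. -/
def SmoothV (u : ℝ → V3 → V3) : Prop := ContDiff ℝ (⊤ : ℕ∞) (fun p : ℝ × V3 => u p.1 p.2)

/-- Lie bracket of vector fields on the time-extended space `ℝ × ℝ³`: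
`[X,Y](p) = DY(p)·X(p) − DX(p)·Y(p)`. -/
def Ebr (X Y : ℝ × V3 → ℝ × V3) (p : ℝ × V3) : ℝ × V3 :=
  fderiv ℝ Y p (X p) - fderiv ℝ X p (Y p)

lemma slice_diff (f : ℝ → V3 → ℝ) (hf : SmoothS f) (t : ℝ) :
    Differentiable ℝ (fun y => f t y) :=
  (hf.comp (ContDiff.prodMk contDiff_const contDiff_id : ContDiff ℝ (⊤ : ℕ∞) (fun y : V3 => (t, y)))).differentiable (by simp)

lemma smoothS_mul (g h : ℝ → V3 → ℝ) (hg : SmoothS g) (hh : SmoothS h) :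
    SmoothS (fun s y => g s y * h s y) := ContDiff.mul hg hh

lemma pd_mul (g h : ℝ → V3 → ℝ) (hg : SmoothS g) (hh : SmoothS h) (i : Fin 3) (t : ℝ) (x : V3) :
    pd i (fun s y => g s y * h s y) t x = pd i g t x * h t x + g t x * pd i h t x := by
  unfold pd
  rw [fderiv_fun_mul ((slice_diff g hg t) x) ((slice_diff h hh t) x)]
  simp only [ContinuousLinearMap.add_apply, ContinuousLinearMap.smul_apply, smul_eq_mul]
  ring

lemma pd_sub (g h : ℝ → V3 → ℝ) (hg : SmoothS g) (hh : SmoothS h) (i : Fin 3) (t : ℝ) (x : V3) :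
    pd i (fun s y => g s y - h s y) t x = pd i g t x - pd i h t x := by
  unfold pd
  rw [fderiv_fun_sub ((slice_diff g hg t) x) ((slice_diff h hh t) x)]
  simp

lemma fderiv_ts (f : ℝ → V3 → ℝ) (hf : SmoothS f) (t : ℝ) (x : V3) (a : ℝ) (w : V3) :
    fderiv ℝ (fun p : ℝ × V3 => f p.1 p.2) (t, x) (a, w)
      = a * pt f t x + ∑ j, w j * pd j f t x := by
  set F := fun p : ℝ × V3 => f p.1 p.2 with hF
  have hdiff : DifferentiableAt ℝ F (t, x) :=
    (hf.differentiable (by simp)).differentiableAt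
  have hpt : pt f t x = fderiv ℝ F (t, x) (1, 0) := by
    have hcurve : HasDerivAt (fun s : ℝ => (s, x)) ((1 : ℝ), (0 : V3)) t := by
      simpa using (HasDerivAt.prodMk (hasDerivAt_id t) (hasDerivAt_const t x))
    exact (hdiff.hasFDerivAt.comp_hasDerivAt t hcurve).deriv
  have hpd : ∀ j : Fin 3, pd j f t x = fderiv ℝ F (t, x) (0, Pi.single j 1) := by
    intro j
    have hcurve : HasFDerivAt (fun y : V3 => (t, y))
        (ContinuousLinearMap.inr ℝ ℝ V3) x :=
      (HasFDerivAt.prodMk (hasFDerivAt_const t x) (hasFDerivAt_id x))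
    have h2 := (hdiff.hasFDerivAt.comp x hcurve).fderiv
    have h3 : (fun y : V3 => f t y) = F ∘ Prod.mk t := rfl
    unfold pd
    rw [h3, h2]
    rfl
  have hw : ((a, w) : ℝ × V3)
      = a • (((1:ℝ), (0:V3)) : ℝ × V3)
        + ∑ j : Fin 3, w j • (((0:ℝ), (Pi.single j 1 : V3)) : ℝ × V3) := by
    apply Prod.ext
    · simp [Prod.fst_sum]
    · simp only [Prod.snd_add, Prod.smul_snd, Prod.snd_sum]
      funext k
      simp [Finset.sum_apply, Pi.single_apply]
  rw [hw, map_add, map_smul, map_sum]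
  simp only [smul_eq_mul]
  rw [← hpt]
  congr 1
  refine Finset.sum_congr rfl fun j _ => ?_
  rw [map_smul, ← hpd j]
  simp

/-- if `B` is divergence free and frozen into the (divergence-free,
incompressible-fluid) velocity field `v`, i.e. `∂B/∂t = ∇×(v×B)`, then the
time-dependent vector field `B` is an infinitesimal symmetry of the suspended
velocity field `∂_t + v·∇`: the Lie bracket `[∂_t + v·∇, B·∇] = 0` on `ℝ × ℝ³`. -/
theorem frozen_field_is_symmetry
    (v B : ℝ → V3 → V3) (hv : SmoothV v) (hB : SmoothV B)
    (hdivv : ∀ t x, div3 v t x = 0)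
    (hdivB : ∀ t x, div3 B t x = 0)
    (hfrozen : ∀ t x i, pt (fun s y => B s y i) t x
        = curl3 (fun s y => cross3 (v s y) (B s y)) t x i) :
    ∀ p : ℝ × V3,
      Ebr (fun q => (1, v q.1 q.2)) (fun q => ((0 : ℝ), B q.1 q.2)) p = 0 :=  by
  have hv' : ∀ i, SmoothS (fun s y => v s y i) := fun i => contDiff_pi.mp hv i
  have hB' : ∀ i, SmoothS (fun s y => B s y i) := fun i => contDiff_pi.mp hB i
  rintro ⟨t, x⟩
  unfold Ebr
  have hBd : DifferentiableAt ℝ (fun q : ℝ × V3 => B q.1 q.2) (t, x) :=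
    (hB.differentiable (by simp)).differentiableAt
  have hvd : DifferentiableAt ℝ (fun q : ℝ × V3 => v q.1 q.2) (t, x) :=
    (hv.differentiable (by simp)).differentiableAt
  have hY : fderiv ℝ (fun q : ℝ × V3 => ((0:ℝ), B q.1 q.2)) (t, x)
      = ContinuousLinearMap.prod 0 (fderiv ℝ (fun q : ℝ × V3 => B q.1 q.2) (t, x)) :=
    (HasFDerivAt.prodMk (hasFDerivAt_const (0:ℝ) ((t, x) : ℝ × V3)) hBd.hasFDerivAt).fderiv
  have hX : fderiv ℝ (fun q : ℝ × V3 => ((1:ℝ), v q.1 q.2)) (t, x)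
      = ContinuousLinearMap.prod 0 (fderiv ℝ (fun q : ℝ × V3 => v q.1 q.2) (t, x)) :=
    (HasFDerivAt.prodMk (hasFDerivAt_const (1:ℝ) ((t, x) : ℝ × V3)) hvd.hasFDerivAt).fderiv
  rw [hY, hX]
  have hpiB : fderiv ℝ (fun q : ℝ × V3 => B q.1 q.2) (t, x)
      = ContinuousLinearMap.pi (fun i => fderiv ℝ (fun q : ℝ × V3 => B q.1 q.2 i) (t, x)) :=
    fderiv_pi (fun i => ((hB' i).differentiable (by simp)).differentiableAt)
  have hpiv : fderiv ℝ (fun q : ℝ × V3 => v q.1 q.2) (t, x)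
      = ContinuousLinearMap.pi (fun i => fderiv ℝ (fun q : ℝ × V3 => v q.1 q.2 i) (t, x)) :=
    fderiv_pi (fun i => ((hv' i).differentiable (by simp)).differentiableAt)
  rw [hpiB, hpiv]
  apply Prod.ext
  · simp
  · simp only [Prod.snd_sub, ContinuousLinearMap.prod_apply, Prod.snd_zero]
    funext i
    simp only [Pi.sub_apply, ContinuousLinearMap.pi_apply, Pi.zero_apply]
    rw [sub_eq_zero]
    rw [fderiv_ts _ (hB' i) t x 1 (v t x), fderiv_ts _ (hv' i) t x 0 (B t x)]
    rw [hfrozen t x i]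
    have h1 := hdivv t x
    have h2 := hdivB t x
    simp only [div3, Fin.sum_univ_three] at h1 h2
    fin_cases i <;>
      simp only [Fin.zero_eta, Fin.mk_one, Fin.reduceFinMk]
    · simp only [curl3, cross3, Matrix.cons_val_zero, Matrix.cons_val_one, Matrix.head_cons,
        Matrix.cons_val_two, Matrix.tail_cons, Fin.sum_univ_three, Fin.isValue]
      rw [pd_sub _ _ (smoothS_mul _ _ (hv' 0) (hB' 1)) (smoothS_mul _ _ (hv' 1) (hB' 0)),
          pd_sub _ _ (smoothS_mul _ _ (hv' 2) (hB' 0)) (smoothS_mul _ _ (hv' 0) (hB' 2)),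
          pd_mul _ _ (hv' 0) (hB' 1), pd_mul _ _ (hv' 1) (hB' 0),
          pd_mul _ _ (hv' 2) (hB' 0), pd_mul _ _ (hv' 0) (hB' 2)]
      linear_combination (v t x 0) * h2 - (B t x 0) * h1
    · simp only [curl3, cross3, Matrix.cons_val_zero, Matrix.cons_val_one, Matrix.head_cons,
        Matrix.cons_val_two, Matrix.tail_cons, Fin.sum_univ_three, Fin.isValue]
      rw [pd_sub _ _ (smoothS_mul _ _ (hv' 1) (hB' 2)) (smoothS_mul _ _ (hv' 2) (hB' 1)),
          pd_sub _ _ (smoothS_mul _ _ (hv' 0) (hB' 1)) (smoothS_mul _ _ (hv' 1) (hB' 0)),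
          pd_mul _ _ (hv' 1) (hB' 2), pd_mul _ _ (hv' 2) (hB' 1),
          pd_mul _ _ (hv' 0) (hB' 1), pd_mul _ _ (hv' 1) (hB' 0)]
      linear_combination (v t x 1) * h2 - (B t x 1) * h1
    · simp only [curl3, cross3, Matrix.cons_val_zero, Matrix.cons_val_one, Matrix.head_cons,
        Matrix.cons_val_two, Matrix.tail_cons, Fin.sum_univ_three, Fin.isValue]
      rw [pd_sub _ _ (smoothS_mul _ _ (hv' 2) (hB' 0)) (smoothS_mul _ _ (hv' 0) (hB' 2)),
          pd_sub _ _ (smoothS_mul _ _ (hv' 1) (hB' 2)) (smoothS_mul _ _ (hv' 2) (hB' 1)),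
          pd_mul _ _ (hv' 2) (hB' 0), pd_mul _ _ (hv' 0) (hB' 2),
          pd_mul _ _ (hv' 1) (hB' 2), pd_mul _ _ (hv' 2) (hB' 1)]
      linear_combination (v t x 2) * h2 - (B t x 2) * h1
end
end

section
/- With Ω as above (built from v, B, φ satisfying the frozen field equation and advection of φ), the interior product of the suspended velocity field ∂_t + v·∇ with Ω equals dφ: i(∂_t + v)(Ω) = dφ. That is, ∂_t + v is Hamiltonian for Ω with Hamiltonian function φ. -/
open scoped BigOperators

noncomputable section

/-- The 2-form `Ω = −(∇φ + v×B)·dx∧dt + B·(dx∧dx)` on `ℝ × ℝ³`, evaluated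
pointwise on a pair of tangent vectors `X = (X.1, X.2)`, `Y = (Y.1, Y.2)`
(time and space components).  Here `dxⁱ∧dt(X,Y) = X.2 i * Y.1 − Y.2 i * X.1`
and `B·(dx∧dx) = B₀ dx¹∧dx² + B₁ dx²∧dx⁰ + B₂ dx⁰∧dx¹`. -/
def OmegaForm (v B : ℝ → V3 → V3) (φ : ℝ → V3 → ℝ) (t : ℝ) (x : V3)
    (X Y : ℝ × V3) : ℝ :=
  (- ∑ i, (grad φ t x + cross3 (v t x) (B t x)) i * (X.2 i * Y.1 - Y.2 i * X.1))
  + B t x 0 * (X.2 1 * Y.2 2 - X.2 2 * Y.2 1)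
  + B t x 1 * (X.2 2 * Y.2 0 - X.2 0 * Y.2 2)
  + B t x 2 * (X.2 0 * Y.2 1 - X.2 1 * Y.2 0)

/-- the interior product of the suspended velocity field
`∂_t + v·∇`, i.e. the vector field `(1, v)`, with `Ω` equals `dφ`:
for every tangent vector `Y`, `Ω((1,v),Y) = ∂φ/∂t · Y.1 + ∇φ · Y.2`.
Thus `∂_t + v` is Hamiltonian for `Ω` with Hamiltonian function `φ`. -/
theorem suspended_velocity_hamiltonian
    (v B : ℝ → V3 → V3) (φ : ℝ → V3 → ℝ)
    (hv : SmoothV v) (hB : SmoothV B) (hφ : SmoothS φ)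
    (hdivB : ∀ t x, div3 B t x = 0)
    (hfrozen : ∀ t x i, pt (fun s y => B s y i) t x
        = curl3 (fun s y => cross3 (v s y) (B s y)) t x i)
    (hadv : ∀ t x, pt φ t x + dot3 (v t x) (grad φ t x) = 0) :
    ∀ t x (Y : ℝ × V3),
      OmegaForm v B φ t x (1, v t x) Y
        = pt φ t x * Y.1 + ∑ i, pd i φ t x * Y.2 i := by
  intro t x Y
  have h := hadv t x
  simp only [OmegaForm, grad, cross3, dot3, Pi.add_apply, Fin.sum_univ_three,
    Matrix.cons_val_zero, Matrix.cons_val_one, Matrix.head_cons,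
    Matrix.cons_val_two, Matrix.tail_cons] at h ⊢
  linear_combination -1 * h * Y.1
end
end

section
/- With Ω = −(∇φ + v×B)·dx∧dt + B·(dx∧dx), the 4-form Ω ∧ Ω equals 2(−B·∇φ) dt∧dx¹∧dx²∧dx³ up to sign convention; in particular Ω is nondegenerate at a point (t,x) if and only if B·∇φ ≠ 0 there. -/
open scoped BigOperators

noncomputable section

lemma omega_eval (v B : ℝ → V3 → V3) (φ : ℝ → V3 → ℝ) (t : ℝ) (x : V3) (X Y : ℝ × V3) :
    OmegaForm v B φ t x X Y =
      X.1 * dot3 (fun i => grad φ t x i + cross3 (v t x) (B t x) i) Y.2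
      - Y.1 * dot3 (fun i => grad φ t x i + cross3 (v t x) (B t x) i) X.2
      + dot3 (B t x) (cross3 X.2 Y.2) := by
  simp [OmegaForm, dot3, cross3, Fin.sum_univ_three]; ring

lemma bg_eq (v B : ℝ → V3 → V3) (φ : ℝ → V3 → ℝ) (t : ℝ) (x : V3) :
    dot3 (B t x) (fun i => grad φ t x i + cross3 (v t x) (B t x) i)
      = dot3 (B t x) (grad φ t x) := by
  simp [dot3, cross3, Fin.sum_univ_three]; ring

lemma wzero (b0 b1 b2 g0 g1 g2 x1 p0 p1 p2 : ℝ)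
    (hg : b0*g0+b1*g1+b2*g2 ≠ 0)
    (hgx : g0*p0+g1*p1+g2*p2 = 0)
    (h0 : x1*g0 + (b1*p2 - b2*p1) = 0)
    (h1 : x1*g1 + (b2*p0 - b0*p2) = 0)
    (h2 : x1*g2 + (b0*p1 - b1*p0) = 0) :
    x1 = 0 ∧ p0 = 0 ∧ p1 = 0 ∧ p2 = 0 := by
  have hx1 : x1 * (b0*g0+b1*g1+b2*g2) = 0 := by linear_combination b0*h0 + b1*h1 + b2*h2
  have hx1' : x1 = 0 := by
    rcases mul_eq_zero.1 hx1 with h | h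
    · exact h
    · exact absurd h hg
  subst hx1'
  have hp0 : p0 * (b0*g0+b1*g1+b2*g2) = 0 := by linear_combination g2*h1 - g1*h2 + b0*hgx
  have hp1 : p1 * (b0*g0+b1*g1+b2*g2) = 0 := by linear_combination g0*h2 - g2*h0 + b1*hgx
  have hp2 : p2 * (b0*g0+b1*g1+b2*g2) = 0 := by linear_combination g1*h0 - g0*h1 + b2*hgx
  refine ⟨rfl, ?_, ?_, ?_⟩ <;>
    [rcases mul_eq_zero.1 hp0 with h|h; rcases mul_eq_zero.1 hp1 with h|h;
     rcases mul_eq_zero.1 hp2 with h|h] <;> first | exact h | exact absurd h hg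

lemma sumsq_eq_zero {a b c : ℝ} (h : a*a + b*b + c*c = 0) : a = 0 ∧ b = 0 ∧ c = 0 := by
  refine ⟨?_, ?_, ?_⟩ <;> nlinarith [sq_nonneg a, sq_nonneg b, sq_nonneg c]

lemma nondeg_iff (Bv Gv : V3) :
    (∀ X : ℝ × V3, X ≠ 0 → ∃ Y : ℝ × V3,
        X.1 * dot3 Gv Y.2 - Y.1 * dot3 Gv X.2 + dot3 Bv (cross3 X.2 Y.2) ≠ 0)
    ↔ dot3 Bv Gv ≠ 0 := by
  constructor
  · intro hnd hBG
    simp only [dot3, Fin.sum_univ_three] at hBG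
    by_cases hB : Bv = 0
    · by_cases h01 : Gv 0 = 0 ∧ Gv 1 = 0
      · have hne : ((0:ℝ), (![1,0,0] : V3)) ≠ 0 := by
          simp only [ne_eq, Prod.ext_iff, not_and, Prod.snd_zero]
          intro _ h
          have := congrFun h 0
          norm_num at this
        obtain ⟨Y, hY⟩ := hnd _ hne
        apply hY
        subst hB
        simp [dot3, cross3, Fin.sum_univ_three, h01.1, h01.2]
      · have hne : ((0:ℝ), (![-Gv 1, Gv 0, 0] : V3)) ≠ 0 := by
          simp only [ne_eq, Prod.ext_iff, not_and, Prod.snd_zero]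
          intro _ h
          apply h01
          constructor
          · simpa using congrFun h 1
          · have := congrFun h 0
            simpa using this
        obtain ⟨Y, hY⟩ := hnd _ hne
        apply hY
        subst hB
        simp only [dot3, cross3, Fin.sum_univ_three, Matrix.cons_val_zero,
          Matrix.cons_val_one, Matrix.head_cons, Matrix.cons_val_two, Matrix.tail_cons,
          Pi.zero_apply]
        ring
    · have hne : ((0:ℝ), Bv) ≠ 0 := by
        simp only [ne_eq, Prod.ext_iff, not_and, Prod.snd_zero]
        intro _ h
        exact hB h
      obtain ⟨Y, hY⟩ := hnd _ hne
      apply hY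
      simp only [dot3, cross3, Fin.sum_univ_three, Matrix.cons_val_zero,
        Matrix.cons_val_one, Matrix.head_cons, Matrix.cons_val_two, Matrix.tail_cons]
      linear_combination (-Y.1) * hBG
  · intro hBG X hX
    by_cases hgx : dot3 Gv X.2 = 0
    · refine ⟨((0:ℝ), fun i => X.1 * Gv i + cross3 Bv X.2 i), ?_⟩
      have hexpr : X.1 * dot3 Gv (fun i => X.1 * Gv i + cross3 Bv X.2 i)
          - 0 * dot3 Gv X.2
          + dot3 Bv (cross3 X.2 (fun i => X.1 * Gv i + cross3 Bv X.2 i))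
          = dot3 (fun i => X.1 * Gv i + cross3 Bv X.2 i)
              (fun i => X.1 * Gv i + cross3 Bv X.2 i) := by
        simp only [dot3, cross3, Fin.sum_univ_three, Matrix.cons_val_zero,
          Matrix.cons_val_one, Matrix.head_cons, Matrix.cons_val_two, Matrix.tail_cons]
        ring
      rw [hexpr]
      intro hww
      simp only [dot3, cross3, Fin.sum_univ_three, Matrix.cons_val_zero,
        Matrix.cons_val_one, Matrix.head_cons, Matrix.cons_val_two,
        Matrix.tail_cons] at hww hgx hBG
      obtain ⟨h0, h1, h2⟩ := sumsq_eq_zero hww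
      obtain ⟨hx1, hp0, hp1, hp2⟩ := wzero (Bv 0) (Bv 1) (Bv 2) (Gv 0) (Gv 1) (Gv 2)
        X.1 (X.2 0) (X.2 1) (X.2 2) hBG hgx h0 h1 h2
      apply hX
      rw [Prod.ext_iff]
      refine ⟨hx1, ?_⟩
      funext i
      fin_cases i <;> assumption
    · refine ⟨((1:ℝ), (0:V3)), ?_⟩
      have : X.1 * dot3 Gv (0:V3) - 1 * dot3 Gv X.2 + dot3 Bv (cross3 X.2 (0:V3))
          = - dot3 Gv X.2 := by
        simp [dot3, cross3, Fin.sum_univ_three]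
      rw [this]
      exact neg_ne_zero.2 hgx

/-- the Liouville 4-form.  Evaluating `Ω ∧ Ω` on the standard
basis `(e_t, e₀, e₁, e₂)` of `ℝ × ℝ³` gives `2 (B·∇φ)` — i.e. the Liouville
density `ρ_φ = −B·∇φ` up to the sign convention of the orientation — and `Ω`
is nondegenerate at `(t,x)` iff `B·∇φ ≠ 0` there. -/
theorem liouville_volume_and_nondegeneracy
    (v B : ℝ → V3 → V3) (φ : ℝ → V3 → ℝ)
    (hv : SmoothV v) (hB : SmoothV B) (hφ : SmoothS φ) :
    ∀ t x,
      (2 * (OmegaForm v B φ t x ((1:ℝ), (0:V3)) ((0:ℝ), Pi.single 0 1)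
              * OmegaForm v B φ t x ((0:ℝ), Pi.single 1 1) ((0:ℝ), Pi.single 2 1)
            - OmegaForm v B φ t x ((1:ℝ), (0:V3)) ((0:ℝ), Pi.single 1 1)
              * OmegaForm v B φ t x ((0:ℝ), Pi.single 0 1) ((0:ℝ), Pi.single 2 1)
            + OmegaForm v B φ t x ((1:ℝ), (0:V3)) ((0:ℝ), Pi.single 2 1)
              * OmegaForm v B φ t x ((0:ℝ), Pi.single 0 1) ((0:ℝ), Pi.single 1 1))
          = 2 * dot3 (B t x) (grad φ t x))
      ∧ ((∀ X : ℝ × V3, X ≠ 0 → ∃ Y : ℝ × V3, OmegaForm v B φ t x X Y ≠ 0)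
          ↔ dot3 (B t x) (grad φ t x) ≠ 0) := by
  
  intro t x
  constructor
  · simp only [OmegaForm, dot3, cross3, Fin.sum_univ_three, Pi.single_apply,
      Pi.add_apply]
    simp [Pi.single_apply]
    ring
  · rw [← bg_eq v B φ t x, ← nondeg_iff]
    simp only [omega_eval]
end
end

section
/- Let v be a smooth divergence-free time-dependent vector field on ℝ³ and φ, h smooth functions with ∂φ/∂t + v·∇φ = 0 and ∂h/∂t + v·∇h = 0. Then the vector field û = ∇φ × ∇h satisfies the characteristic symmetry condition ∂û/∂t + [v, û] = 0, where [v,û] is the spatial Lie bracket; equivalently ∂û/∂t = ∇×(v×û) (using ∇·v = 0 and ∇·û = 0). -/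
open scoped BigOperators

noncomputable section

/-- The vector field `û = ∇φ × ∇h` built from two scalar fields. -/
def uhat (φ h : ℝ → V3 → ℝ) : ℝ → V3 → V3 :=
  fun t x => cross3 (grad φ t x) (grad h t x)

namespace CGAux
abbrev P := ℝ × V3
def D (F : P → ℝ) (w : P) (p : P) : ℝ := fderiv ℝ F p w
def et : P := (1, 0)
def wv (m : Fin 3) : P := (0, Pi.single m 1)

lemma D_smooth {F : P → ℝ} (hF : ContDiff ℝ (⊤ : ℕ∞) F) (w : P) : ContDiff ℝ (⊤ : ℕ∞) (D F w) :=
  (hF.fderiv_right (by simp)).clm_apply contDiff_const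

lemma D_diff {F : P → ℝ} (hF : ContDiff ℝ (⊤ : ℕ∞) F) (p : P) : DifferentiableAt ℝ F p :=
  (hF.differentiable (by simp)).differentiableAt

lemma D_mul {F G : P → ℝ} (hF : ContDiff ℝ (⊤ : ℕ∞) F) (hG : ContDiff ℝ (⊤ : ℕ∞) G) (w q : P) :
    D (fun p => F p * G p) w q = D F w q * G q + F q * D G w q := by
  have := fderiv_fun_mul (𝕜 := ℝ) (D_diff hF q) (D_diff hG q)
  simp only [D, this]; simp [mul_comm]; ring

lemma D_sub {F G : P → ℝ} (hF : ContDiff ℝ (⊤ : ℕ∞) F) (hG : ContDiff ℝ (⊤ : ℕ∞) G) (w q : P) :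
    D (fun p => F p - G p) w q = D F w q - D G w q := by
  simp only [D, fderiv_fun_sub (D_diff hF q) (D_diff hG q)]; simp


lemma D_symm {F : P → ℝ} (hF : ContDiff ℝ (⊤ : ℕ∞) F) (e w : P) (q : P) :
    D (D F e) w q = D (D F w) e q := by
  have hsym : IsSymmSndFDerivAt ℝ F q := hF.contDiffAt.isSymmSndFDerivAt (by rw [minSmoothness_of_isRCLikeNormedField]; exact WithTop.coe_le_coe.mpr le_top)
  have hd : DifferentiableAt ℝ (fderiv ℝ F) q :=
    ((hF.fderiv_right (m := 1) (WithTop.coe_le_coe.mpr le_top)).differentiable one_ne_zero).differentiableAt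
  have h1 : ∀ u z : P, D (D F u) z q = fderiv ℝ (fderiv ℝ F) q z u := by
    intro u z
    show fderiv ℝ (fun p => fderiv ℝ F p u) q z = _
    rw [fderiv_clm_apply (𝕜 := ℝ) hd (differentiableAt_const u)]
    simp
  rw [h1 e w, h1 w e]
  exact hsym w e

lemma D_neg {F : P → ℝ} (w q : P) :
    D (fun p => -(F p)) w q = - D F w q := by
  simp only [D, fderiv_neg]; simp

lemma D_add3 {F G K : P → ℝ} (hF : ContDiff ℝ (⊤ : ℕ∞) F) (hG : ContDiff ℝ (⊤ : ℕ∞) G)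
    (hK : ContDiff ℝ (⊤ : ℕ∞) K) (w q : P) :
    D (fun p => F p + G p + K p) w q = D F w q + D G w q + D K w q := by
  simp only [D, fderiv_fun_add (((D_diff hF q).fun_add (D_diff hG q))) (D_diff hK q),
    fderiv_fun_add (D_diff hF q) (D_diff hG q)]
  simp

lemma D_congr {F G : P → ℝ} (h : ∀ p, F p = G p) (w q : P) : D F w q = D G w q := by
  have : F = G := funext h
  rw [D, D, this]

def crossF (A B : Fin 3 → P → ℝ) : Fin 3 → P → ℝ :=
  fun i p => (cross3 (fun j => A j p) (fun j => B j p)) i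

lemma key0 (V A B : Fin 3 → P → ℝ)
    (hV : ∀ m, ContDiff ℝ (⊤ : ℕ∞) (V m)) (hA : ∀ m, ContDiff ℝ (⊤ : ℕ∞) (A m))
    (hB : ∀ m, ContDiff ℝ (⊤ : ℕ∞) (B m))
    (hsymA : ∀ j m p, D (A j) (wv m) p = D (A m) (wv j) p)
    (hsymB : ∀ j m p, D (B j) (wv m) p = D (B m) (wv j) p)
    (hAt : ∀ j p, D (A j) et p =
      -((D (V 0) (wv j) p * A 0 p + V 0 p * D (A 0) (wv j) p)
        + (D (V 1) (wv j) p * A 1 p + V 1 p * D (A 1) (wv j) p)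
        + (D (V 2) (wv j) p * A 2 p + V 2 p * D (A 2) (wv j) p)))
    (hBt : ∀ j p, D (B j) et p =
      -((D (V 0) (wv j) p * B 0 p + V 0 p * D (B 0) (wv j) p)
        + (D (V 1) (wv j) p * B 1 p + V 1 p * D (B 1) (wv j) p)
        + (D (V 2) (wv j) p * B 2 p + V 2 p * D (B 2) (wv j) p)))
    (hdiv : ∀ p, D (V 0) (wv 0) p + D (V 1) (wv 1) p + D (V 2) (wv 2) p = 0)
    (q : P) :
    (D (crossF A B 0) et q
      + ((V 0 q * D (crossF A B 0) (wv 0) q + V 1 q * D (crossF A B 0) (wv 1) q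
            + V 2 q * D (crossF A B 0) (wv 2) q)
         - (crossF A B 0 q * D (V 0) (wv 0) q + crossF A B 1 q * D (V 0) (wv 1) q
            + crossF A B 2 q * D (V 0) (wv 2) q)) = 0)
    ∧ D (crossF A B 0) et q
        = D (crossF V (crossF A B) 2) (wv 1) q
          - D (crossF V (crossF A B) 1) (wv 2) q := by
  have hDA : ∀ (m j : Fin 3), ContDiff ℝ (⊤ : ℕ∞) (D (A m) (wv j)) := fun m j => D_smooth (hA m) _
  have hDB : ∀ (m j : Fin 3), ContDiff ℝ (⊤ : ℕ∞) (D (B m) (wv j)) := fun m j => D_smooth (hB m) _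
  have hDV : ∀ (m j : Fin 3), ContDiff ℝ (⊤ : ℕ∞) (D (V m) (wv j)) := fun m j => D_smooth (hV m) _
  have e0 : crossF A B 0 = fun p => A 1 p * B 2 p - A 2 p * B 1 p := by
    funext p; simp [crossF, cross3]
  have e1 : crossF A B 1 = fun p => A 2 p * B 0 p - A 0 p * B 2 p := by
    funext p; simp [crossF, cross3]
  have e2 : crossF A B 2 = fun p => A 0 p * B 1 p - A 1 p * B 0 p := by
    funext p; simp [crossF, cross3]
  have f1 : crossF V (crossF A B) 1 = fun p =>
      V 2 p * (A 1 p * B 2 p - A 2 p * B 1 p) - V 0 p * (A 0 p * B 1 p - A 1 p * B 0 p) := by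
    funext p; simp [crossF, cross3]
  have f2 : crossF V (crossF A B) 2 = fun p =>
      V 0 p * (A 2 p * B 0 p - A 0 p * B 2 p) - V 1 p * (A 1 p * B 2 p - A 2 p * B 1 p) := by
    funext p; simp [crossF, cross3]
  rw [e0, e1, e2, f1, f2]
  constructor
  · simp (disch := fun_prop) only [D_sub, D_mul]
    simp only [hAt, hBt]
    simp only [hsymA 1 0, hsymA 2 0, hsymA 2 1, hsymB 1 0, hsymB 2 0, hsymB 2 1]
    linear_combination (-(A 1 q * B 2 q - A 2 q * B 1 q)) * hdiv q
  · simp (disch := fun_prop) only [D_sub, D_mul]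
    simp only [hAt, hBt]
    simp only [hsymA 1 0, hsymA 2 0, hsymA 2 1, hsymB 1 0, hsymB 2 0, hsymB 2 1]
    ring

lemma key1 (V A B : Fin 3 → P → ℝ)
    (hV : ∀ m, ContDiff ℝ (⊤ : ℕ∞) (V m)) (hA : ∀ m, ContDiff ℝ (⊤ : ℕ∞) (A m))
    (hB : ∀ m, ContDiff ℝ (⊤ : ℕ∞) (B m))
    (hsymA : ∀ j m p, D (A j) (wv m) p = D (A m) (wv j) p)
    (hsymB : ∀ j m p, D (B j) (wv m) p = D (B m) (wv j) p)
    (hAt : ∀ j p, D (A j) et p =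
      -((D (V 0) (wv j) p * A 0 p + V 0 p * D (A 0) (wv j) p)
        + (D (V 1) (wv j) p * A 1 p + V 1 p * D (A 1) (wv j) p)
        + (D (V 2) (wv j) p * A 2 p + V 2 p * D (A 2) (wv j) p)))
    (hBt : ∀ j p, D (B j) et p =
      -((D (V 0) (wv j) p * B 0 p + V 0 p * D (B 0) (wv j) p)
        + (D (V 1) (wv j) p * B 1 p + V 1 p * D (B 1) (wv j) p)
        + (D (V 2) (wv j) p * B 2 p + V 2 p * D (B 2) (wv j) p)))
    (hdiv : ∀ p, D (V 0) (wv 0) p + D (V 1) (wv 1) p + D (V 2) (wv 2) p = 0)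
    (q : P) :
    (D (crossF A B 1) et q
      + ((V 0 q * D (crossF A B 1) (wv 0) q + V 1 q * D (crossF A B 1) (wv 1) q
            + V 2 q * D (crossF A B 1) (wv 2) q)
         - (crossF A B 0 q * D (V 1) (wv 0) q + crossF A B 1 q * D (V 1) (wv 1) q
            + crossF A B 2 q * D (V 1) (wv 2) q)) = 0)
    ∧ D (crossF A B 1) et q
        = D (crossF V (crossF A B) 0) (wv 2) q
          - D (crossF V (crossF A B) 2) (wv 0) q := by
  have hDA : ∀ (m j : Fin 3), ContDiff ℝ (⊤ : ℕ∞) (D (A m) (wv j)) := fun m j => D_smooth (hA m) _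
  have hDB : ∀ (m j : Fin 3), ContDiff ℝ (⊤ : ℕ∞) (D (B m) (wv j)) := fun m j => D_smooth (hB m) _
  have hDV : ∀ (m j : Fin 3), ContDiff ℝ (⊤ : ℕ∞) (D (V m) (wv j)) := fun m j => D_smooth (hV m) _
  have e0 : crossF A B 0 = fun p => A 1 p * B 2 p - A 2 p * B 1 p := by
    funext p; simp [crossF, cross3]
  have e1 : crossF A B 1 = fun p => A 2 p * B 0 p - A 0 p * B 2 p := by
    funext p; simp [crossF, cross3]
  have e2 : crossF A B 2 = fun p => A 0 p * B 1 p - A 1 p * B 0 p := by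
    funext p; simp [crossF, cross3]
  have f0 : crossF V (crossF A B) 0 = fun p =>
      V 1 p * (A 0 p * B 1 p - A 1 p * B 0 p) - V 2 p * (A 2 p * B 0 p - A 0 p * B 2 p) := by
    funext p; simp [crossF, cross3]
  have f2 : crossF V (crossF A B) 2 = fun p =>
      V 0 p * (A 2 p * B 0 p - A 0 p * B 2 p) - V 1 p * (A 1 p * B 2 p - A 2 p * B 1 p) := by
    funext p; simp [crossF, cross3]
  rw [e0, e1, e2, f0, f2]
  constructor
  · simp (disch := fun_prop) only [D_sub, D_mul]
    simp only [hAt, hBt]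
    simp only [hsymA 1 0, hsymA 2 0, hsymA 2 1, hsymB 1 0, hsymB 2 0, hsymB 2 1]
    linear_combination (-(A 2 q * B 0 q - A 0 q * B 2 q)) * hdiv q
  · simp (disch := fun_prop) only [D_sub, D_mul]
    simp only [hAt, hBt]
    simp only [hsymA 1 0, hsymA 2 0, hsymA 2 1, hsymB 1 0, hsymB 2 0, hsymB 2 1]
    ring

lemma key2 (V A B : Fin 3 → P → ℝ)
    (hV : ∀ m, ContDiff ℝ (⊤ : ℕ∞) (V m)) (hA : ∀ m, ContDiff ℝ (⊤ : ℕ∞) (A m))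
    (hB : ∀ m, ContDiff ℝ (⊤ : ℕ∞) (B m))
    (hsymA : ∀ j m p, D (A j) (wv m) p = D (A m) (wv j) p)
    (hsymB : ∀ j m p, D (B j) (wv m) p = D (B m) (wv j) p)
    (hAt : ∀ j p, D (A j) et p =
      -((D (V 0) (wv j) p * A 0 p + V 0 p * D (A 0) (wv j) p)
        + (D (V 1) (wv j) p * A 1 p + V 1 p * D (A 1) (wv j) p)
        + (D (V 2) (wv j) p * A 2 p + V 2 p * D (A 2) (wv j) p)))
    (hBt : ∀ j p, D (B j) et p =
      -((D (V 0) (wv j) p * B 0 p + V 0 p * D (B 0) (wv j) p)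
        + (D (V 1) (wv j) p * B 1 p + V 1 p * D (B 1) (wv j) p)
        + (D (V 2) (wv j) p * B 2 p + V 2 p * D (B 2) (wv j) p)))
    (hdiv : ∀ p, D (V 0) (wv 0) p + D (V 1) (wv 1) p + D (V 2) (wv 2) p = 0)
    (q : P) :
    (D (crossF A B 2) et q
      + ((V 0 q * D (crossF A B 2) (wv 0) q + V 1 q * D (crossF A B 2) (wv 1) q
            + V 2 q * D (crossF A B 2) (wv 2) q)
         - (crossF A B 0 q * D (V 2) (wv 0) q + crossF A B 1 q * D (V 2) (wv 1) q
            + crossF A B 2 q * D (V 2) (wv 2) q)) = 0)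
    ∧ D (crossF A B 2) et q
        = D (crossF V (crossF A B) 1) (wv 0) q
          - D (crossF V (crossF A B) 0) (wv 1) q := by
  have hDA : ∀ (m j : Fin 3), ContDiff ℝ (⊤ : ℕ∞) (D (A m) (wv j)) := fun m j => D_smooth (hA m) _
  have hDB : ∀ (m j : Fin 3), ContDiff ℝ (⊤ : ℕ∞) (D (B m) (wv j)) := fun m j => D_smooth (hB m) _
  have hDV : ∀ (m j : Fin 3), ContDiff ℝ (⊤ : ℕ∞) (D (V m) (wv j)) := fun m j => D_smooth (hV m) _
  have e0 : crossF A B 0 = fun p => A 1 p * B 2 p - A 2 p * B 1 p := by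
    funext p; simp [crossF, cross3]
  have e1 : crossF A B 1 = fun p => A 2 p * B 0 p - A 0 p * B 2 p := by
    funext p; simp [crossF, cross3]
  have e2 : crossF A B 2 = fun p => A 0 p * B 1 p - A 1 p * B 0 p := by
    funext p; simp [crossF, cross3]
  have f0 : crossF V (crossF A B) 0 = fun p =>
      V 1 p * (A 0 p * B 1 p - A 1 p * B 0 p) - V 2 p * (A 2 p * B 0 p - A 0 p * B 2 p) := by
    funext p; simp [crossF, cross3]
  have f1 : crossF V (crossF A B) 1 = fun p =>
      V 2 p * (A 1 p * B 2 p - A 2 p * B 1 p) - V 0 p * (A 0 p * B 1 p - A 1 p * B 0 p) := by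
    funext p; simp [crossF, cross3]
  rw [e0, e1, e2, f0, f1]
  constructor
  · simp (disch := fun_prop) only [D_sub, D_mul]
    simp only [hAt, hBt]
    simp only [hsymA 1 0, hsymA 2 0, hsymA 2 1, hsymB 1 0, hsymB 2 0, hsymB 2 1]
    linear_combination (-(A 0 q * B 1 q - A 1 q * B 0 q)) * hdiv q
  · simp (disch := fun_prop) only [D_sub, D_mul]
    simp only [hAt, hBt]
    simp only [hsymA 1 0, hsymA 2 0, hsymA 2 1, hsymB 1 0, hsymB 2 0, hsymB 2 1]
    ring

def J (f : ℝ → V3 → ℝ) : P → ℝ := fun p => f p.1 p.2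

def Af (f : ℝ → V3 → ℝ) : Fin 3 → P → ℝ := fun m => D (J f) (wv m)

def Vf (v : ℝ → V3 → V3) : Fin 3 → P → ℝ := fun m p => v p.1 p.2 m

lemma Af_smooth {f : ℝ → V3 → ℝ} (hf : SmoothS f) (m : Fin 3) : ContDiff ℝ (⊤ : ℕ∞) (Af f m) :=
  D_smooth hf _

lemma Vf_smooth {v : ℝ → V3 → V3} (hv : SmoothV v) (m : Fin 3) : ContDiff ℝ (⊤ : ℕ∞) (Vf v m) :=
  contDiff_pi.1 hv m

lemma pt_eq {F : P → ℝ} (hF : ContDiff ℝ (⊤ : ℕ∞) F) (t : ℝ) (x : V3) :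
    pt (fun s y => F (s, y)) t x = D F et (t, x) := by
  have h1 : HasDerivAt (fun s : ℝ => (s, x)) ((1 : ℝ), (0 : V3)) t := by
    simpa using (hasDerivAt_id t).prodMk (hasDerivAt_const t x)
  have h2 : HasFDerivAt F (fderiv ℝ F (t, x)) (t, x) :=
    ((hF.differentiable (by simp)) (t, x)).hasFDerivAt
  have := h2.comp_hasDerivAt t h1
  simpa [pt, D, et, Function.comp_def] using this.deriv

lemma pd_eq {F : P → ℝ} (hF : ContDiff ℝ (⊤ : ℕ∞) F) (i : Fin 3) (t : ℝ) (x : V3) :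
    pd i (fun s y => F (s, y)) t x = D F (wv i) (t, x) := by
  have h1 : HasFDerivAt (fun y : V3 => (t, y))
      ((ContinuousLinearMap.inr ℝ ℝ V3)) x := by
    exact (hasFDerivAt_const t x).prodMk (hasFDerivAt_id x)
  have h2 : HasFDerivAt F (fderiv ℝ F (t, x)) (t, x) :=
    ((hF.differentiable (by simp)) (t, x)).hasFDerivAt
  have h3 := h2.comp x h1
  have hf : fderiv ℝ (fun y : V3 => F (t, y)) x
      = (fderiv ℝ F (t, x)).comp (ContinuousLinearMap.inr ℝ ℝ V3) := by
    simpa [Function.comp_def] using h3.fderiv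
  simp [pd, D, wv, hf]

lemma pd_eq' {f : ℝ → V3 → ℝ} (hf : SmoothS f) (j : Fin 3) (t : ℝ) (x : V3) :
    pd j f t x = Af f j (t, x) := pd_eq hf j t x

lemma pt_eq' {f : ℝ → V3 → ℝ} (hf : SmoothS f) (t : ℝ) (x : V3) :
    pt f t x = D (J f) et (t, x) := pt_eq hf t x

lemma pdv_eq {v : ℝ → V3 → V3} (hv : SmoothV v) (i j : Fin 3) (t : ℝ) (x : V3) :
    pd j (fun s y => v s y i) t x = D (Vf v i) (wv j) (t, x) :=
  pd_eq (Vf_smooth hv i) j t x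

lemma crossF_smooth {A B : Fin 3 → P → ℝ} (hA : ∀ m, ContDiff ℝ (⊤ : ℕ∞) (A m))
    (hB : ∀ m, ContDiff ℝ (⊤ : ℕ∞) (B m)) (i : Fin 3) : ContDiff ℝ (⊤ : ℕ∞) (crossF A B i) := by
  have e0 : crossF A B 0 = fun p => A 1 p * B 2 p - A 2 p * B 1 p := by
    funext p; simp [crossF, cross3]
  have e1 : crossF A B 1 = fun p => A 2 p * B 0 p - A 0 p * B 2 p := by
    funext p; simp [crossF, cross3]
  have e2 : crossF A B 2 = fun p => A 0 p * B 1 p - A 1 p * B 0 p := by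
    funext p; simp [crossF, cross3]
  match i with
  | 0 => rw [e0]; exact ((hA 1).mul (hB 2)).sub ((hA 2).mul (hB 1))
  | 1 => rw [e1]; exact ((hA 2).mul (hB 0)).sub ((hA 0).mul (hB 2))
  | 2 => rw [e2]; exact ((hA 0).mul (hB 1)).sub ((hA 1).mul (hB 0))

lemma uhat_eq {φ h : ℝ → V3 → ℝ} (hφ : SmoothS φ) (hh : SmoothS h) (s : ℝ) (y : V3)
    (i : Fin 3) : uhat φ h s y i = crossF (Af φ) (Af h) i (s, y) := by
  have g1 : grad φ s y = fun j => Af φ j (s, y) := funext fun j => pd_eq' hφ j s y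
  have g2 : grad h s y = fun j => Af h j (s, y) := funext fun j => pd_eq' hh j s y
  show cross3 (grad φ s y) (grad h s y) i = _
  rw [g1, g2]; rfl

lemma Af_symm {f : ℝ → V3 → ℝ} (hf : SmoothS f) (j m : Fin 3) (p : P) :
    D (Af f j) (wv m) p = D (Af f m) (wv j) p := D_symm hf _ _ p

lemma adv_fun {φ : ℝ → V3 → ℝ} {v : ℝ → V3 → V3} (hφ : SmoothS φ) (hv : SmoothV v)
    (hadv : ∀ t x, pt φ t x + dot3 (v t x) (grad φ t x) = 0) (p : P) :
    D (J φ) et p = -(Vf v 0 p * Af φ 0 p + Vf v 1 p * Af φ 1 p + Vf v 2 p * Af φ 2 p) := by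
  obtain ⟨t, x⟩ := p
  have h1 := hadv t x
  rw [pt_eq' hφ] at h1
  simp only [dot3, Fin.sum_univ_three, grad, pd_eq' hφ] at h1
  show D (J φ) et (t, x) = _
  simp only [Vf]
  linear_combination h1

lemma At_time {φ : ℝ → V3 → ℝ} {v : ℝ → V3 → V3} (hφ : SmoothS φ) (hv : SmoothV v)
    (hadv : ∀ t x, pt φ t x + dot3 (v t x) (grad φ t x) = 0) (j : Fin 3) (p : P) :
    D (Af φ j) et p =
      -((D (Vf v 0) (wv j) p * Af φ 0 p + Vf v 0 p * D (Af φ 0) (wv j) p)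
        + (D (Vf v 1) (wv j) p * Af φ 1 p + Vf v 1 p * D (Af φ 1) (wv j) p)
        + (D (Vf v 2) (wv j) p * Af φ 2 p + Vf v 2 p * D (Af φ 2) (wv j) p)) := by
  have hVs : ∀ m, ContDiff ℝ (⊤ : ℕ∞) (Vf v m) := Vf_smooth hv
  have hAs : ∀ m, ContDiff ℝ (⊤ : ℕ∞) (Af φ m) := Af_smooth hφ
  have h0 : D (Af φ j) et p = D (D (J φ) et) (wv j) p := D_symm hφ _ _ p
  rw [h0, D_congr (adv_fun hφ hv hadv) (wv j) p]
  have hsum : ContDiff ℝ (⊤ : ℕ∞) (fun p => Vf v 0 p * Af φ 0 p + Vf v 1 p * Af φ 1 p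
      + Vf v 2 p * Af φ 2 p) := by fun_prop
  rw [D_neg (F := fun p => Vf v 0 p * Af φ 0 p + Vf v 1 p * Af φ 1 p + Vf v 2 p * Af φ 2 p)]
  rw [D_add3 ((hVs 0).mul (hAs 0)) ((hVs 1).mul (hAs 1)) ((hVs 2).mul (hAs 2))]
  rw [D_mul (hVs 0) (hAs 0), D_mul (hVs 1) (hAs 1), D_mul (hVs 2) (hAs 2)]

lemma div_fun {v : ℝ → V3 → V3} (hv : SmoothV v) (hdivv : ∀ t x, div3 v t x = 0) (p : P) :
    D (Vf v 0) (wv 0) p + D (Vf v 1) (wv 1) p + D (Vf v 2) (wv 2) p = 0 := by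
  obtain ⟨t, x⟩ := p
  have h1 := hdivv t x
  simp only [div3, Fin.sum_univ_three, pdv_eq hv] at h1
  linear_combination h1

end CGAux

/-- if `v` is divergence free and `φ, h` are advected scalars,
then `û = ∇φ × ∇h` satisfies the characteristic symmetry condition
`∂û/∂t + [v,û] = 0` (spatial Lie bracket `[v,û] = (v·∇)û − (û·∇)v`);
equivalently, `û` is frozen-in: `∂û/∂t = ∇×(v×û)`. -/
theorem cross_gradients_is_symmetry
    (v : ℝ → V3 → V3) (φ h : ℝ → V3 → ℝ)
    (hv : SmoothV v) (hφ : SmoothS φ) (hh : SmoothS h)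
    (hdivv : ∀ t x, div3 v t x = 0)
    (hadvφ : ∀ t x, pt φ t x + dot3 (v t x) (grad φ t x) = 0)
    (hadvh : ∀ t x, pt h t x + dot3 (v t x) (grad h t x) = 0) :
    ∀ t x i,
      (pt (fun s y => uhat φ h s y i) t x
          + ((∑ j, v t x j * pd j (fun s y => uhat φ h s y i) t x)
              - ∑ j, uhat φ h t x j * pd j (fun s y => v s y i) t x) = 0)
      ∧ pt (fun s y => uhat φ h s y i) t x
          = curl3 (fun s y => cross3 (v s y) (uhat φ h s y)) t x i := by
  intro t x i
  have hVs : ∀ m, ContDiff ℝ (⊤ : ℕ∞) (CGAux.Vf v m) := CGAux.Vf_smooth hv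
  have hAs : ∀ m, ContDiff ℝ (⊤ : ℕ∞) (CGAux.Af φ m) := CGAux.Af_smooth hφ
  have hBs : ∀ m, ContDiff ℝ (⊤ : ℕ∞) (CGAux.Af h m) := CGAux.Af_smooth hh
  have hUs : ∀ m, ContDiff ℝ (⊤ : ℕ∞) (CGAux.crossF (CGAux.Af φ) (CGAux.Af h) m) :=
    CGAux.crossF_smooth hAs hBs
  have hWs : ∀ m, ContDiff ℝ (⊤ : ℕ∞)
      (CGAux.crossF (CGAux.Vf v) (CGAux.crossF (CGAux.Af φ) (CGAux.Af h)) m) :=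
    CGAux.crossF_smooth hVs hUs
  have G1 : ∀ i : Fin 3, pt (fun s y => uhat φ h s y i) t x
      = CGAux.D (CGAux.crossF (CGAux.Af φ) (CGAux.Af h) i) CGAux.et (t, x) := by
    intro i
    have e : (fun s y => uhat φ h s y i)
        = (fun s y => CGAux.crossF (CGAux.Af φ) (CGAux.Af h) i (s, y)) := by
      funext s y; exact CGAux.uhat_eq hφ hh s y i
    rw [e]; exact CGAux.pt_eq (hUs i) t x
  have G2 : ∀ j i : Fin 3, pd j (fun s y => uhat φ h s y i) t x
      = CGAux.D (CGAux.crossF (CGAux.Af φ) (CGAux.Af h) i) (CGAux.wv j) (t, x) := by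
    intro j i
    have e : (fun s y => uhat φ h s y i)
        = (fun s y => CGAux.crossF (CGAux.Af φ) (CGAux.Af h) i (s, y)) := by
      funext s y; exact CGAux.uhat_eq hφ hh s y i
    rw [e]; exact CGAux.pd_eq (hUs i) j t x
  have G3 : ∀ (i j : Fin 3), pd j (fun s y => v s y i) t x
      = CGAux.D (CGAux.Vf v i) (CGAux.wv j) (t, x) := fun i j => CGAux.pdv_eq hv i j t x
  have G4 : ∀ j : Fin 3, uhat φ h t x j
      = CGAux.crossF (CGAux.Af φ) (CGAux.Af h) j (t, x) := fun j => CGAux.uhat_eq hφ hh t x j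
  have G5 : ∀ (j k : Fin 3), pd j (fun s y => cross3 (v s y) (uhat φ h s y) k) t x
      = CGAux.D (CGAux.crossF (CGAux.Vf v) (CGAux.crossF (CGAux.Af φ) (CGAux.Af h)) k)
          (CGAux.wv j) (t, x) := by
    intro j k
    have e : (fun s y => cross3 (v s y) (uhat φ h s y) k)
        = (fun s y => CGAux.crossF (CGAux.Vf v)
            (CGAux.crossF (CGAux.Af φ) (CGAux.Af h)) k (s, y)) := by
      funext s y
      have g1 : v s y = fun j => CGAux.Vf v j (s, y) := rfl
      have g2 : uhat φ h s y
          = fun j => CGAux.crossF (CGAux.Af φ) (CGAux.Af h) j (s, y) :=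
        funext fun j => CGAux.uhat_eq hφ hh s y j
      show cross3 (v s y) (uhat φ h s y) k = _
      rw [g2]; rfl
    rw [e]; exact CGAux.pd_eq (hWs k) j t x
  have hsymA := CGAux.Af_symm hφ
  have hsymB := CGAux.Af_symm hh
  have hAt := CGAux.At_time hφ hv hadvφ
  have hBt := CGAux.At_time hh hv hadvh
  have hdiv := CGAux.div_fun hv hdivv
  fin_cases i
  · obtain ⟨k1, k2⟩ := CGAux.key0 (CGAux.Vf v) (CGAux.Af φ) (CGAux.Af h)
      hVs hAs hBs hsymA hsymB hAt hBt hdiv (t, x)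
    simp only [CGAux.Vf] at k1 k2
    simp only [Fin.zero_eta, Fin.mk_one, Fin.reduceFinMk]
    constructor
    · simp only [Fin.sum_univ_three, G1, G2, G3, G4]
      linear_combination k1
    · simp only [curl3, Matrix.cons_val_zero, Matrix.cons_val_one, Matrix.head_cons,
        Matrix.cons_val_two, Matrix.tail_cons, Fin.zero_eta, Fin.mk_one, G1, G5]
      linear_combination k2
  · obtain ⟨k1, k2⟩ := CGAux.key1 (CGAux.Vf v) (CGAux.Af φ) (CGAux.Af h)
      hVs hAs hBs hsymA hsymB hAt hBt hdiv (t, x)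
    simp only [CGAux.Vf] at k1 k2
    simp only [Fin.zero_eta, Fin.mk_one, Fin.reduceFinMk]
    constructor
    · simp only [Fin.sum_univ_three, G1, G2, G3, G4]
      linear_combination k1
    · simp only [curl3, Matrix.cons_val_zero, Matrix.cons_val_one, Matrix.head_cons,
        Matrix.cons_val_two, Matrix.tail_cons, Fin.zero_eta, Fin.mk_one, G1, G5]
      linear_combination k2
  · obtain ⟨k1, k2⟩ := CGAux.key2 (CGAux.Vf v) (CGAux.Af φ) (CGAux.Af h)
      hVs hAs hBs hsymA hsymB hAt hBt hdiv (t, x)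
    simp only [CGAux.Vf] at k1 k2
    simp only [Fin.zero_eta, Fin.mk_one, Fin.reduceFinMk]
    constructor
    · simp only [Fin.sum_univ_three, G1, G2, G3, G4]
      linear_combination k1
    · simp only [curl3, Matrix.cons_val_zero, Matrix.cons_val_one, Matrix.head_cons,
        Matrix.cons_val_two, Matrix.tail_cons, Fin.zero_eta, Fin.mk_one, G1, G5]
      linear_combination k2
end
end

section
/- Let v satisfy a general momentum equation ∂v/∂t + (v·∇)v = F and let û be a time-dependent vector field with ∂û/∂t + [v,û] = 0 (characteristic symmetry condition). If û·(F + ∇(|v|²/2)) = 0 everywhere, then û·v is a Lagrangian invariant: ∂(û·v)/∂t + v·∇(û·v) = 0. -/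
open scoped BigOperators

noncomputable section

lemma comp_smooth {u : ℝ → V3 → V3} (hu : SmoothV u) (i : Fin 3) :
    ContDiff ℝ (⊤ : ℕ∞) (fun p : ℝ × V3 => u p.1 p.2 i) := contDiff_pi.mp hu i

lemma diff_t {f : ℝ × V3 → ℝ} (hf : ContDiff ℝ (⊤ : ℕ∞) f) (x : V3) :
    Differentiable ℝ (fun s => f (s, x)) :=
  (hf.differentiable (by simp)).comp (differentiable_id.prodMk (differentiable_const x))

lemma diff_x {f : ℝ × V3 → ℝ} (hf : ContDiff ℝ (⊤ : ℕ∞) f) (t : ℝ) :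
    Differentiable ℝ (fun y => f (t, y)) :=
  (hf.differentiable (by simp)).comp ((differentiable_const t).prodMk differentiable_id)

lemma pt_dot {a b : ℝ → V3 → V3} (ha : SmoothV a) (hb : SmoothV b) (t : ℝ) (x : V3) :
    pt (fun s y => dot3 (a s y) (b s y)) t x
      = ∑ i, (pt (fun s y => a s y i) t x * b t x i
              + a t x i * pt (fun s y => b s y i) t x) := by
  unfold pt dot3
  rw [deriv_fun_sum (fun i _ => ((diff_t (comp_smooth ha i) x t).fun_mul
        (diff_t (comp_smooth hb i) x t)))]
  exact Finset.sum_congr rfl fun i _ =>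
    deriv_mul (diff_t (comp_smooth ha i) x t) (diff_t (comp_smooth hb i) x t)

lemma pd_dot {a b : ℝ → V3 → V3} (ha : SmoothV a) (hb : SmoothV b)
    (j : Fin 3) (t : ℝ) (x : V3) :
    pd j (fun s y => dot3 (a s y) (b s y)) t x
      = ∑ i, (pd j (fun s y => a s y i) t x * b t x i
              + a t x i * pd j (fun s y => b s y i) t x) := by
  unfold pd dot3
  rw [fderiv_fun_sum (fun i _ => ((diff_x (comp_smooth ha i) t x).fun_mul
        (diff_x (comp_smooth hb i) t x)))]
  rw [ContinuousLinearMap.sum_apply]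
  refine Finset.sum_congr rfl fun i _ => ?_
  rw [fderiv_fun_mul (diff_x (comp_smooth ha i) t x) (diff_x (comp_smooth hb i) t x)]
  simp [mul_comm]
  ring

lemma pd_half {v : ℝ → V3 → V3} (hv : SmoothV v) (i : Fin 3) (t : ℝ) (x : V3) :
    pd i (fun s y => dot3 (v s y) (v s y) / 2) t x
      = ∑ j, v t x j * pd i (fun s y => v s y j) t x := by
  have h : pd i (fun s y => dot3 (v s y) (v s y) / 2) t x
      = pd i (fun s y => dot3 (v s y) (v s y)) t x / 2 := by
    have hg : DifferentiableAt ℝ (fun y => dot3 (v t y) (v t y)) x := by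
      unfold dot3
      exact DifferentiableAt.fun_sum fun j _ =>
        ((diff_x (comp_smooth hv j) t x).fun_mul (diff_x (comp_smooth hv j) t x))
    unfold pd
    simp only [div_eq_mul_inv]
    rw [fderiv_mul_const hg]
    simp [div_eq_mul_inv, mul_comm]
  rw [h, pd_dot hv hv]
  rw [Finset.sum_div]
  exact Finset.sum_congr rfl fun j _ => by ring

/-- if `v` satisfies a general momentum equation
`∂v/∂t + (v·∇)v = F`, `û` satisfies the characteristic symmetry condition
`∂û/∂t + [v,û] = 0` with `[v,û] = (v·∇)û − (û·∇)v`, and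
`û·(F + ∇(|v|²/2)) = 0` everywhere, then `û·v` is a Lagrangian invariant. -/
theorem cross_helicity_lagrangian_invariant
    (v u F : ℝ → V3 → V3)
    (hv : SmoothV v) (hu : SmoothV u) (hF : SmoothV F)
    (hmom : ∀ t x i,
      pt (fun s y => v s y i) t x
          + ∑ j, v t x j * pd j (fun s y => v s y i) t x = F t x i)
    (hsym : ∀ t x i,
      pt (fun s y => u s y i) t x
          + ((∑ j, v t x j * pd j (fun s y => u s y i) t x)
              - ∑ j, u t x j * pd j (fun s y => v s y i) t x) = 0)
    (horth : ∀ t x,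
      ∑ i, u t x i
          * (F t x i + pd i (fun s y => dot3 (v s y) (v s y) / 2) t x) = 0) :
    ∀ t x,
      pt (fun s y => dot3 (u s y) (v s y)) t x
        + dot3 (v t x) (grad (fun s y => dot3 (u s y) (v s y)) t x) = 0 := by
  intro t x
  have hm := fun i => hmom t x i
  have hs := fun i => hsym t x i
  have ho := horth t x
  simp only [pd_half hv] at ho
  rw [pt_dot hu hv]
  have hgrad : dot3 (v t x) (grad (fun s y => dot3 (u s y) (v s y)) t x)
      = ∑ j, v t x j * pd j (fun s y => dot3 (u s y) (v s y)) t x := rfl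
  rw [hgrad]
  simp only [pd_dot hu hv]
  simp only [Fin.sum_univ_three] at *
  linear_combination v t x 0 * hs 0 + v t x 1 * hs 1 + v t x 2 * hs 2
    + u t x 0 * hm 0 + u t x 1 * hm 1 + u t x 2 * hm 2 + ho
end
end
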